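/- (Theorem 1, main policy improvement bound) In the finite MDP setup, for any function f : S → ℝ and any two policies π and π', J(π') − J(π) ≥ (1/(1−γ)) ( L_{π,f}(π') − (2γ ε_f^{π'}/(1−γ)) Σ_s d^π(s) D_TV(π'||π)[s] ). Moreover, when π' = π both sides are identically zero. -/

import Mathlib

open Finset Matrix

noncomputable section

/-- The state-transition matrix of policy `π`: `(Pmat P π) s' s = Σ_a P(s'|s,a) π(a|s)`. -/
def Pmat {S A : Type*} [Fintype A] (P : S → A → S → ℝ) (π : S → A → ℝ) : Matrix S S ℝ :=
  Matrix.of fun s' s => ∑ a, P s a s' * π s a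

/-- The discounted future state distribution `d^π = (1-γ)(I - γ P_π)⁻¹ μ`. -/
def dpi {S A : Type*} [Fintype S] [Fintype A] [DecidableEq S]
    (γ : ℝ) (P : S → A → S → ℝ) (μ : S → ℝ) (π : S → A → ℝ) : S → ℝ :=
  (1 - γ) • ((1 - γ • Pmat P π)⁻¹).mulVec μ

/-- The expected discounted return `J(π)`. -/
def J {S A : Type*} [Fintype S] [Fintype A] [DecidableEq S]
    (γ : ℝ) (P : S → A → S → ℝ) (R : S → A → S → ℝ) (μ : S → ℝ) (π : S → A → ℝ) : ℝ :=
  (1 / (1 - γ)) * ∑ s, dpi γ P μ π s * ∑ a, π s a * ∑ s', P s a s' * R s a s'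

/-- The TD-error-like quantity `δ_f(s,a,s') = R(s,a,s') + γ f(s') - f(s)`. -/
def δf {S A : Type*} (γ : ℝ) (R : S → A → S → ℝ) (f : S → ℝ) (s : S) (a : A) (s' : S) : ℝ :=
  R s a s' + γ * f s' - f s

/-- The surrogate objective `L_{π,f}(π')`. -/
def Lsur {S A : Type*} [Fintype S] [Fintype A] [DecidableEq S]
    (γ : ℝ) (P : S → A → S → ℝ) (R : S → A → S → ℝ) (μ : S → ℝ) (f : S → ℝ)
    (π π' : S → A → ℝ) : ℝ :=
  ∑ s, dpi γ P μ π s * ∑ a, (π' s a - π s a) * ∑ s', P s a s' * δf γ R f s a s'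

/-- The maximal absolute expected shaped reward
`ε_f^{π'} = max_s |Σ_a π'(a|s) Σ_{s'} P(s'|s,a) δ_f(s,a,s')|`. -/
def epsf {S A : Type*} [Fintype S] [Fintype A] [Nonempty S]
    (γ : ℝ) (P : S → A → S → ℝ) (R : S → A → S → ℝ) (f : S → ℝ) (π' : S → A → ℝ) : ℝ :=
  Finset.univ.sup' Finset.univ_nonempty
    fun s => |∑ a, π' s a * ∑ s', P s a s' * δf γ R f s a s'|

/-- The per-state total variational divergence `D_TV(π'||π)[s] = (1/2) Σ_a |π'(a|s) - π(a|s)|`. -/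
def DTV {S A : Type*} [Fintype A] (π' π : S → A → ℝ) (s : S) : ℝ :=
  (1 / 2) * ∑ a, |π' s a - π s a|

/-!
Since `d^π` solves `(1 - γ P_π) d^π = (1 - γ) μ`, the potential `f` telescopes:
`J(π) = ⟨μ, f⟩ + ⟨d^π, δ̄_π⟩ / (1 - γ)` with `δ̄_π(s) = E_{a ∼ π, s' ∼ P} δ_f(s, a, s')`. Hence
`(1 - γ) (J(π') - J(π)) = L_{π,f}(π') + ⟨d^{π'} - d^π, δ̄_{π'}⟩`, and the last term is at least
`-ε_f^{π'} ‖d^{π'} - d^π‖₁`. For a column-stochastic `Q`, `1 - γ Q` stretches ℓ¹ norms by at least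
`1 - γ`; applied to `(1 - γ P_{π'}) (d^{π'} - d^π) = γ (P_{π'} - P_π) d^π` this bounds
`‖d^{π'} - d^π‖₁` by `2γ / (1 - γ) · Σ_s d^π(s) D_TV(π'‖π)[s]`. The same ℓ¹ estimate shows that
`1 - γ Q` is invertible and that `d^π ≥ 0`.
-/

namespace Matrix

variable {n : Type*} [Fintype n]

lemma abs_dotProduct_le_mul_sum_abs {c : ℝ} (x : n → ℝ) {y : n → ℝ} (hy : ∀ i, |y i| ≤ c) :
    |x ⬝ᵥ y| ≤ c * ∑ i, |x i| := by
  rw [mul_sum]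
  refine (abs_sum_le_sum_abs _ _).trans (sum_le_sum fun i _ => ?_)
  rw [abs_mul, mul_comm]
  exact mul_le_mul_of_nonneg_right (hy i) (abs_nonneg _)

variable [DecidableEq n] {Q : Matrix n n ℝ} {γ : ℝ}

lemma sum_abs_mulVec_le_of_mem_colStochastic (hQ : Q ∈ colStochastic ℝ n) (v : n → ℝ) :
    ∑ i, |(Q *ᵥ v) i| ≤ ∑ i, |v i| := by
  calc ∑ i, |(Q *ᵥ v) i| ≤ ∑ i, (Q *ᵥ fun j => |v j|) i := by
        refine sum_le_sum fun i _ => (abs_sum_le_sum_abs _ _).trans_eq ?_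
        simp only [mulVec, dotProduct, abs_mul, abs_of_nonneg (hQ.1 _ _)]
    _ = ∑ i, |v i| := sum_mulVec_of_mem_colStochastic hQ

lemma sum_one_sub_smul_mulVec_of_mem_colStochastic (hQ : Q ∈ colStochastic ℝ n) (v : n → ℝ) :
    ∑ i, ((1 - γ • Q) *ᵥ v) i = (1 - γ) * ∑ i, v i := by
  simp only [sub_mulVec, one_mulVec, smul_mulVec, Pi.sub_apply, Pi.smul_apply, smul_eq_mul,
    sum_sub_distrib, ← mul_sum, sum_mulVec_of_mem_colStochastic hQ]
  ring

lemma one_sub_mul_sum_abs_le_of_mem_colStochastic (hQ : Q ∈ colStochastic ℝ n) (hγ : 0 ≤ γ)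
    (v : n → ℝ) : (1 - γ) * ∑ i, |v i| ≤ ∑ i, |((1 - γ • Q) *ᵥ v) i| := by
  have hv : ∀ i, v i = ((1 - γ • Q) *ᵥ v) i + γ * (Q *ᵥ v) i := fun i => by
    simp [sub_mulVec, smul_mulVec]
  have htri : ∑ i, |v i| ≤ ∑ i, |((1 - γ • Q) *ᵥ v) i| + γ * ∑ i, |(Q *ᵥ v) i| := by
    rw [mul_sum, ← sum_add_distrib]
    refine sum_le_sum fun i _ => ?_
    rw [hv i, ← abs_of_nonneg hγ, ← abs_mul, abs_of_nonneg hγ]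
    exact abs_add_le _ _
  nlinarith [mul_le_mul_of_nonneg_left (sum_abs_mulVec_le_of_mem_colStochastic hQ v) hγ]

lemma isUnit_det_one_sub_smul_of_mem_colStochastic (hQ : Q ∈ colStochastic ℝ n)
    (hγ0 : 0 ≤ γ) (hγ1 : γ < 1) : IsUnit (1 - γ • Q).det := by
  rw [isUnit_iff_ne_zero, Ne, ← exists_mulVec_eq_zero_iff]
  rintro ⟨v, hv, hMv⟩
  have h := one_sub_mul_sum_abs_le_of_mem_colStochastic hQ hγ0 v
  simp only [hMv, Pi.zero_apply, abs_zero, sum_const_zero] at h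
  have hsum : ∑ i, |v i| = 0 :=
    le_antisymm (nonpos_of_mul_nonpos_right h (by linarith)) (sum_nonneg fun i _ => abs_nonneg _)
  exact hv (funext fun i => abs_eq_zero.1 ((sum_eq_zero_iff_of_nonneg fun j _ => abs_nonneg _).1
    hsum i (mem_univ i)))

lemma nonneg_of_one_sub_smul_mulVec_nonneg (hQ : Q ∈ colStochastic ℝ n) (hγ0 : 0 ≤ γ)
    (hγ1 : γ < 1) {v : n → ℝ} (hv : ∀ i, 0 ≤ ((1 - γ • Q) *ᵥ v) i) (i : n) : 0 ≤ v i := by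
  have h := one_sub_mul_sum_abs_le_of_mem_colStochastic hQ hγ0 v
  simp only [abs_of_nonneg (hv _), sum_one_sub_smul_mulVec_of_mem_colStochastic hQ] at h
  have hsum : ∑ j, (|v j| - v j) ≤ 0 := by
    rw [sum_sub_distrib]
    linarith [le_of_mul_le_mul_left h (by linarith : (0 : ℝ) < 1 - γ)]
  have hi : |v i| - v i ≤ 0 :=
    (single_le_sum (fun j _ => sub_nonneg.2 (le_abs_self (v j))) (mem_univ i)).trans hsum
  linarith [abs_nonneg (v i)]

end Matrix

def expectedδf {S A : Type*} [Fintype S] [Fintype A] (γ : ℝ) (P : S → A → S → ℝ)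
    (R : S → A → S → ℝ) (f : S → ℝ) (π : S → A → ℝ) (s : S) : ℝ :=
  ∑ a, π s a * ∑ s', P s a s' * δf γ R f s a s'

def expectedReward {S A : Type*} [Fintype S] [Fintype A] (P : S → A → S → ℝ)
    (R : S → A → S → ℝ) (π : S → A → ℝ) (s : S) : ℝ :=
  ∑ a, π s a * ∑ s', P s a s' * R s a s'

lemma Pmat_sub_Pmat {S A : Type*} [Fintype A] (P : S → A → S → ℝ) (π' π : S → A → ℝ) :
    Pmat P π' - Pmat P π = Pmat P (π' - π) := by
  ext s' s
  simp [Pmat, mul_sub]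

section MDP

variable {S A : Type*} [Fintype S] [Fintype A] {γ : ℝ}
  {P : S → A → S → ℝ} {R : S → A → S → ℝ} {μ : S → ℝ} {π π' : S → A → ℝ}

lemma Pmat_mem_colStochastic [DecidableEq S] (hP0 : ∀ s a s', 0 ≤ P s a s')
    (hP1 : ∀ s a, ∑ s', P s a s' = 1) (hπ0 : ∀ s a, 0 ≤ π s a) (hπ1 : ∀ s, ∑ a, π s a = 1) :
    Pmat P π ∈ colStochastic ℝ S := by
  refine mem_colStochastic_iff_sum.2
    ⟨fun _ _ => sum_nonneg fun _ _ => mul_nonneg (hP0 _ _ _) (hπ0 _ _), fun s => ?_⟩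
  simp only [Pmat, of_apply]
  rw [sum_comm]
  simp only [← sum_mul, hP1, one_mul, hπ1]

lemma sum_abs_Pmat_mulVec_le (hP0 : ∀ s a s', 0 ≤ P s a s') (hP1 : ∀ s a, ∑ s', P s a s' = 1)
    (ρ : S → A → ℝ) (v : S → ℝ) :
    ∑ s', |(Pmat P ρ *ᵥ v) s'| ≤ ∑ s, |v s| * ∑ a, |ρ s a| := by
  calc ∑ s', |(Pmat P ρ *ᵥ v) s'|
      ≤ ∑ s', ∑ s, ∑ a, P s a s' * (|ρ s a| * |v s|) := by
        refine sum_le_sum fun s' _ => (abs_sum_le_sum_abs _ _).trans (sum_le_sum fun s _ => ?_)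
        simp only [Pmat, of_apply, sum_mul]
        refine (abs_sum_le_sum_abs _ _).trans_eq (sum_congr rfl fun a _ => ?_)
        rw [abs_mul, abs_mul, abs_of_nonneg (hP0 _ _ _), mul_assoc]
    _ = ∑ s, |v s| * ∑ a, |ρ s a| := by
        rw [sum_comm]
        refine sum_congr rfl fun s _ => ?_
        rw [sum_comm, mul_sum]
        simp only [← sum_mul, hP1, one_mul, mul_comm]

variable [DecidableEq S]

lemma one_sub_smul_Pmat_mulVec_dpi (hγ0 : 0 ≤ γ) (hγ1 : γ < 1)
    (hQ : Pmat P π ∈ colStochastic ℝ S) : (1 - γ • Pmat P π) *ᵥ dpi γ P μ π = (1 - γ) • μ := by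
  rw [dpi, mulVec_smul, mulVec_mulVec,
    mul_nonsing_inv _ (isUnit_det_one_sub_smul_of_mem_colStochastic hQ hγ0 hγ1), one_mulVec]

lemma dpi_nonneg (hγ0 : 0 ≤ γ) (hγ1 : γ < 1) (hQ : Pmat P π ∈ colStochastic ℝ S)
    (hμ : ∀ s, 0 ≤ μ s) (s : S) : 0 ≤ dpi γ P μ π s := by
  refine nonneg_of_one_sub_smul_mulVec_nonneg hQ hγ0 hγ1 (fun t => ?_) s
  rw [one_sub_smul_Pmat_mulVec_dpi hγ0 hγ1 hQ]
  exact mul_nonneg (by linarith) (hμ t)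

lemma one_sub_mul_sum_abs_dpi_sub_dpi_le (hγ0 : 0 ≤ γ) (hγ1 : γ < 1)
    (hQ : Pmat P π ∈ colStochastic ℝ S) (hQ' : Pmat P π' ∈ colStochastic ℝ S) :
    (1 - γ) * ∑ s, |dpi γ P μ π' s - dpi γ P μ π s|
      ≤ γ * ∑ s, |(Pmat P (π' - π) *ᵥ dpi γ P μ π) s| := by
  set d := dpi γ P μ π
  have hsplit : (1 - γ • Pmat P π') *ᵥ d
      = (1 - γ • Pmat P π) *ᵥ d - γ • (Pmat P (π' - π) *ᵥ d) := by
    rw [← Pmat_sub_Pmat]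
    simp only [sub_mulVec, smul_mulVec, smul_sub]
    abel
  have hdiff : (1 - γ • Pmat P π') *ᵥ (dpi γ P μ π' - d) = γ • (Pmat P (π' - π) *ᵥ d) := by
    rw [mulVec_sub, hsplit, one_sub_smul_Pmat_mulVec_dpi hγ0 hγ1 hQ,
      one_sub_smul_Pmat_mulVec_dpi hγ0 hγ1 hQ', sub_sub_cancel]
  calc (1 - γ) * ∑ s, |dpi γ P μ π' s - d s|
      ≤ ∑ s, |((1 - γ • Pmat P π') *ᵥ (dpi γ P μ π' - d)) s| :=
        one_sub_mul_sum_abs_le_of_mem_colStochastic hQ' hγ0 _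
    _ = γ * ∑ s, |(Pmat P (π' - π) *ᵥ d) s| := by
        simp only [hdiff, Pi.smul_apply, smul_eq_mul, abs_mul, abs_of_nonneg hγ0, mul_sum]

lemma sum_abs_dpi_sub_dpi_le (hγ0 : 0 ≤ γ) (hγ1 : γ < 1) (hP0 : ∀ s a s', 0 ≤ P s a s')
    (hP1 : ∀ s a, ∑ s', P s a s' = 1) (hμ : ∀ s, 0 ≤ μ s)
    (hπ0 : ∀ s a, 0 ≤ π s a) (hπ1 : ∀ s, ∑ a, π s a = 1)
    (hπ'0 : ∀ s a, 0 ≤ π' s a) (hπ'1 : ∀ s, ∑ a, π' s a = 1) :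
    ∑ s, |dpi γ P μ π' s - dpi γ P μ π s|
      ≤ 2 * γ / (1 - γ) * ∑ s, dpi γ P μ π s * DTV π' π s := by
  have hQ := Pmat_mem_colStochastic hP0 hP1 hπ0 hπ1
  have hcontr := one_sub_mul_sum_abs_dpi_sub_dpi_le (μ := μ) hγ0 hγ1 hQ
    (Pmat_mem_colStochastic hP0 hP1 hπ'0 hπ'1)
  have hTV : ∑ s, |dpi γ P μ π s| * ∑ a, |(π' - π) s a|
      = 2 * ∑ s, dpi γ P μ π s * DTV π' π s := by
    simp only [abs_of_nonneg (dpi_nonneg hγ0 hγ1 hQ hμ _), DTV, Pi.sub_apply, mul_sum]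
    refine sum_congr rfl fun s _ => sum_congr rfl fun a _ => ?_
    ring
  have hPmat := hTV ▸ sum_abs_Pmat_mulVec_le hP0 hP1 (π' - π) (dpi γ P μ π)
  rw [div_mul_eq_mul_div, le_div_iff₀ (by linarith)]
  linarith [mul_le_mul_of_nonneg_left hPmat hγ0]

lemma expectedδf_eq_expectedReward_sub_vecMul {f : S → ℝ} (hP1 : ∀ s a, ∑ s', P s a s' = 1)
    (hπ1 : ∀ s, ∑ a, π s a = 1) :
    expectedδf γ P R f π = expectedReward P R π - f ᵥ* (1 - γ • Pmat P π) := by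
  ext s
  have hnext : ∑ a, π s a * ∑ s', P s a s' * (γ * f s') = γ * ∑ s', f s' * Pmat P π s' s := by
    simp only [Pmat, of_apply, mul_sum]
    rw [sum_comm]
    exact sum_congr rfl fun _ _ => sum_congr rfl fun _ _ => by ring
  simp only [expectedδf, expectedReward, δf, Pi.sub_apply, vecMul_sub, vecMul_one, vecMul_smul,
    Pi.smul_apply, smul_eq_mul, mul_add, mul_sub, sum_add_distrib, sum_sub_distrib, ← sum_mul,
    hP1, hπ1, hnext, vecMul, dotProduct]
  ring

lemma J_eq_dotProduct_add_dpi_dotProduct_expectedδf (hγ0 : 0 ≤ γ) (hγ1 : γ < 1)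
    (hP0 : ∀ s a s', 0 ≤ P s a s') (hP1 : ∀ s a, ∑ s', P s a s' = 1)
    (hπ0 : ∀ s a, 0 ≤ π s a) (hπ1 : ∀ s, ∑ a, π s a = 1) (f : S → ℝ) :
    J γ P R μ π = μ ⬝ᵥ f + 1 / (1 - γ) * (dpi γ P μ π ⬝ᵥ expectedδf γ P R f π) := by
  have hJ : J γ P R μ π = 1 / (1 - γ) * (dpi γ P μ π ⬝ᵥ expectedReward P R π) := rfl
  have hpotential : dpi γ P μ π ⬝ᵥ (f ᵥ* (1 - γ • Pmat P π)) = (1 - γ) * (μ ⬝ᵥ f) := by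
    rw [dotProduct_comm, ← dotProduct_mulVec,
      one_sub_smul_Pmat_mulVec_dpi hγ0 hγ1 (Pmat_mem_colStochastic hP0 hP1 hπ0 hπ1),
      dotProduct_smul, dotProduct_comm, smul_eq_mul]
  rw [hJ, expectedδf_eq_expectedReward_sub_vecMul hP1 hπ1, dotProduct_sub, hpotential]
  field_simp [show 1 - γ ≠ 0 by linarith]
  ring

lemma Lsur_eq_dpi_dotProduct {f : S → ℝ} :
    Lsur γ P R μ f π π' = dpi γ P μ π ⬝ᵥ (expectedδf γ P R f π' - expectedδf γ P R f π) := by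
  refine sum_congr rfl fun s _ => ?_
  simp only [Pi.sub_apply, expectedδf, sub_mul, sum_sub_distrib]

end MDP

theorem stmt_11_general {S A : Type*} [Fintype S] [Fintype A] [Nonempty S] [DecidableEq S]
    (γ : ℝ) (hγ0 : 0 ≤ γ) (hγ1 : γ < 1)
    (P : S → A → S → ℝ) (hP0 : ∀ s a s', 0 ≤ P s a s') (hP1 : ∀ s a, ∑ s', P s a s' = 1)
    (R : S → A → S → ℝ)
    (μ : S → ℝ) (hμ0 : ∀ s, 0 ≤ μ s)
    (π π' : S → A → ℝ)
    (hπ0 : ∀ s a, 0 ≤ π s a) (hπ1 : ∀ s, ∑ a, π s a = 1)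
    (hπ'0 : ∀ s a, 0 ≤ π' s a) (hπ'1 : ∀ s, ∑ a, π' s a = 1)
    (f : S → ℝ) :
    (J γ P R μ π' - J γ P R μ π
        ≥ (1 / (1 - γ)) * (Lsur γ P R μ f π π'
            - (2 * γ * epsf γ P R f π' / (1 - γ)) * ∑ s, dpi γ P μ π s * DTV π' π s))
    ∧ (π' = π →
        J γ P R μ π' - J γ P R μ π = 0 ∧
          (1 / (1 - γ)) * (Lsur γ P R μ f π π'
            - (2 * γ * epsf γ P R f π' / (1 - γ)) * ∑ s, dpi γ P μ π s * DTV π' π s) = 0) := by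
  refine ⟨?_, fun h => ?_⟩
  · have hdrift := sum_abs_dpi_sub_dpi_le hγ0 hγ1 hP0 hP1 hμ0 hπ0 hπ1 hπ'0 hπ'1
    set d := dpi γ P μ π
    set d' := dpi γ P μ π'
    set ε := epsf γ P R f π'
    have hε : ∀ s, |expectedδf γ P R f π' s| ≤ ε :=
      fun s => le_sup' (f := fun s => |_|) (mem_univ s)
    have hε0 : 0 ≤ ε := (abs_nonneg _).trans (hε (Classical.arbitrary S))
    have hdiff : J γ P R μ π' - J γ P R μ π
        = 1 / (1 - γ) * (Lsur γ P R μ f π π' + (d' - d) ⬝ᵥ expectedδf γ P R f π') := by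
      rw [J_eq_dotProduct_add_dpi_dotProduct_expectedδf hγ0 hγ1 hP0 hP1 hπ'0 hπ'1 f,
        J_eq_dotProduct_add_dpi_dotProduct_expectedδf hγ0 hγ1 hP0 hP1 hπ0 hπ1 f,
        Lsur_eq_dpi_dotProduct, dotProduct_sub, sub_dotProduct]
      ring
    have herr := abs_dotProduct_le_mul_sum_abs (d' - d) hε
    rw [hdiff, ge_iff_le]
    gcongr 1 / (1 - γ) * ?_
    have hbound : ε * ∑ s, |d' s - d s| ≤ 2 * γ * ε / (1 - γ) * ∑ s, d s * DTV π' π s :=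
      (mul_le_mul_of_nonneg_left hdrift hε0).trans_eq (by ring)
    linarith [neg_abs_le ((d' - d) ⬝ᵥ expectedδf γ P R f π'), herr.trans hbound]
  · subst h
    simp [Lsur, DTV]

theorem stmt_11 {S A : Type*} [Fintype S] [Fintype A] [Nonempty S] [Nonempty A] [DecidableEq S]
    (γ : ℝ) (hγ0 : 0 ≤ γ) (hγ1 : γ < 1)
    (P : S → A → S → ℝ) (hP0 : ∀ s a s', 0 ≤ P s a s') (hP1 : ∀ s a, ∑ s', P s a s' = 1)
    (R : S → A → S → ℝ)
    (μ : S → ℝ) (hμ0 : ∀ s, 0 ≤ μ s) (hμ1 : ∑ s, μ s = 1)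
    (π π' : S → A → ℝ)
    (hπ0 : ∀ s a, 0 ≤ π s a) (hπ1 : ∀ s, ∑ a, π s a = 1)
    (hπ'0 : ∀ s a, 0 ≤ π' s a) (hπ'1 : ∀ s, ∑ a, π' s a = 1)
    (f : S → ℝ) :
    (J γ P R μ π' - J γ P R μ π
        ≥ (1 / (1 - γ)) * (Lsur γ P R μ f π π'
            - (2 * γ * epsf γ P R f π' / (1 - γ)) * ∑ s, dpi γ P μ π s * DTV π' π s))
    ∧ (π' = π →
        J γ P R μ π' - J γ P R μ π = 0 ∧
          (1 / (1 - γ)) * (Lsur γ P R μ f π π'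
            - (2 * γ * epsf γ P R f π' / (1 - γ)) * ∑ s, dpi γ P μ π s * DTV π' π s) = 0) :=
  stmt_11_general γ hγ0 hγ1 P hP0 hP1 R μ hμ0 π π' hπ0 hπ1 hπ'0 hπ'1 f
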